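/- Let ρ_AB be a density operator on H_A⊗H_B and ρ_BC a density operator on H_B⊗H_C such that ρ_B := Tr_A(ρ_AB) = Tr_C(ρ_BC) is invertible. Then the operator ϱ_ABC := ρ_BC^{1/2} ρ_B^{−1/2} ρ_AB ρ_B^{−1/2} ρ_BC^{1/2} (each factor extended to H_A⊗H_B⊗H_C by tensoring with identities) is positive semidefinite with trace 1 and satisfies Tr_A(ϱ_ABC) = ρ_BC. -/

import Mathlib

open scoped Matrix ComplexOrder

variable {A B C : Type*}

/-- Functional calculus for Hermitian matrices: apply `f : ℝ → ℝ` to the eigenvalues. -/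
noncomputable def matFun {n : Type*} [Fintype n] [DecidableEq n]
    (f : ℝ → ℝ) (ρ : Matrix n n ℂ) : Matrix n n ℂ :=
  if h : ρ.IsHermitian then
    (h.eigenvectorUnitary : Matrix n n ℂ) *
      Matrix.diagonal (fun i => (f (h.eigenvalues i) : ℂ)) *
        (star (h.eigenvectorUnitary : Matrix n n ℂ))
  else 0

/-- Matrix logarithm via functional calculus. -/
noncomputable def matLog {n : Type*} [Fintype n] [DecidableEq n] (ρ : Matrix n n ℂ) :
    Matrix n n ℂ := matFun Real.log ρ

/-- Matrix square root via functional calculus. -/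
noncomputable def matSqrt {n : Type*} [Fintype n] [DecidableEq n] (ρ : Matrix n n ℂ) :
    Matrix n n ℂ := matFun Real.sqrt ρ

/-- Matrix inverse square root via functional calculus. -/
noncomputable def matInvSqrt {n : Type*} [Fintype n] [DecidableEq n] (ρ : Matrix n n ℂ) :
    Matrix n n ℂ := matFun (fun x => (Real.sqrt x)⁻¹) ρ

/-- A density operator: positive semidefinite with trace one. -/
def IsDensity {n : Type*} [Fintype n] (ρ : Matrix n n ℂ) : Prop :=
  ρ.PosSemidef ∧ ρ.trace = 1

/-- The von Neumann entropy `S(ρ) = -Tr(ρ log ρ)`, computed via eigenvalues. -/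
noncomputable def vnEntropy {n : Type*} [Fintype n] [DecidableEq n] (ρ : Matrix n n ℂ) : ℝ :=
  if h : ρ.IsHermitian then -∑ i, h.eigenvalues i * Real.log (h.eigenvalues i) else 0

/-- The quantum relative entropy `S(ρ‖σ) = Tr[ρ (log ρ - log σ)]`. -/
noncomputable def relEntropy {n : Type*} [Fintype n] [DecidableEq n]
    (ρ σ : Matrix n n ℂ) : ℝ := ((ρ * (matLog ρ - matLog σ)).trace).re

section Tripartite

variable [Fintype A] [Fintype B] [Fintype C]

/-- Partial trace over the third factor. -/
noncomputable def ptC (ρ : Matrix (A × B × C) (A × B × C) ℂ) : Matrix (A × B) (A × B) ℂ :=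
  fun x y => ∑ c : C, ρ (x.1, x.2, c) (y.1, y.2, c)

/-- Partial trace over the first factor. -/
noncomputable def ptA (ρ : Matrix (A × B × C) (A × B × C) ℂ) : Matrix (B × C) (B × C) ℂ :=
  fun x y => ∑ a : A, ρ (a, x) (a, y)

/-- Partial trace over the first and third factors. -/
noncomputable def ptAC (ρ : Matrix (A × B × C) (A × B × C) ℂ) : Matrix B B ℂ :=
  fun b b' => ∑ a : A, ∑ c : C, ρ (a, b, c) (a, b', c)

/-- Partial trace over the first and second factors. -/
noncomputable def ptAB (ρ : Matrix (A × B × C) (A × B × C) ℂ) : Matrix C C ℂ :=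
  fun c c' => ∑ a : A, ∑ b : B, ρ (a, b, c) (a, b, c')

/-- Partial trace over the second and third factors. -/
noncomputable def ptBC (ρ : Matrix (A × B × C) (A × B × C) ℂ) : Matrix A A ℂ :=
  fun a a' => ∑ b : B, ∑ c : C, ρ (a, b, c) (a', b, c)

/-- Partial trace of a bipartite state over its first factor. -/
noncomputable def bptFst {X Y : Type*} [Fintype X] [Fintype Y]
    (M : Matrix (X × Y) (X × Y) ℂ) : Matrix Y Y ℂ :=
  fun b b' => ∑ x : X, M (x, b) (x, b')

/-- Partial trace of a bipartite state over its second factor. -/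
noncomputable def bptSnd {X Y : Type*} [Fintype X] [Fintype Y]
    (M : Matrix (X × Y) (X × Y) ℂ) : Matrix X X ℂ :=
  fun a a' => ∑ y : Y, M (a, y) (a', y)

variable [DecidableEq A] [DecidableEq B] [DecidableEq C]

/-- Extend an operator on the first two factors to the tripartite space: `M ⊗ id_C`. -/
noncomputable def extAB (M : Matrix (A × B) (A × B) ℂ) :
    Matrix (A × B × C) (A × B × C) ℂ :=
  fun x y => M (x.1, x.2.1) (y.1, y.2.1) * (if x.2.2 = y.2.2 then 1 else 0)

/-- Extend an operator on the last two factors to the tripartite space: `id_A ⊗ M`. -/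
noncomputable def extBC (M : Matrix (B × C) (B × C) ℂ) :
    Matrix (A × B × C) (A × B × C) ℂ :=
  fun x y => (if x.1 = y.1 then 1 else 0) * M x.2 y.2

/-- Extend an operator on the middle factor to the tripartite space: `id_A ⊗ M ⊗ id_C`. -/
noncomputable def extB (M : Matrix B B ℂ) : Matrix (A × B × C) (A × B × C) ℂ :=
  fun x y => (if x.1 = y.1 then 1 else 0) * M x.2.1 y.2.1 * (if x.2.2 = y.2.2 then 1 else 0)

/-- Quantum conditional mutual information `I_ρ(A:C|B)`. -/
noncomputable def qcmi (ρ : Matrix (A × B × C) (A × B × C) ℂ) : ℝ :=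
  vnEntropy (ptC ρ) + vnEntropy (ptA ρ) - vnEntropy (ptAC ρ) - vnEntropy ρ

end Tripartite

/-! With `S = ρ_BC^{1/2}` and `J = ρ_B^{-1/2} ⊗ 1_C`, the operator is the congruence
`(J S)ᴴ (ρ_AB ⊗ 1_C) (J S)` of a positive operator, hence positive. Operators acting trivially on
`A` pass through `Tr_A`, so `Tr_A ϱ = S (ρ_B^{-1/2} ρ_B ρ_B^{-1/2} ⊗ 1_C) S = S² = ρ_BC`, and the
trace follows. The two functional-calculus identities are read off Mathlib's `cfc`, which agrees
with `matFun` on Hermitian matrices. -/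

open Matrix

section FunctionalCalculus

variable {n : Type*} [Fintype n] [DecidableEq n] {ρ : Matrix n n ℂ}

lemma matFun_eq_cfc (hρ : ρ.IsHermitian) (f : ℝ → ℝ) : matFun f ρ = cfc f ρ := by
  rw [hρ.cfc_eq, IsHermitian.cfc, Unitary.conjStarAlgAut_apply, matFun, dif_pos hρ]
  rfl

lemma matFun_isHermitian (f : ℝ → ℝ) (ρ : Matrix n n ℂ) : (matFun f ρ).IsHermitian := by
  by_cases hρ : ρ.IsHermitian
  · rw [matFun_eq_cfc hρ]
    exact cfc_predicate f ρ
  · simp [matFun, hρ]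

lemma matSqrt_mul_self (hρ : ρ.PosSemidef) : matSqrt ρ * matSqrt ρ = ρ := by
  have hρsa : IsSelfAdjoint ρ := hρ.1
  have hspec : ∀ x ∈ spectrum ℝ ρ, 0 ≤ x := by
    rw [hρ.1.spectrum_real_eq_range_eigenvalues]
    rintro - ⟨i, rfl⟩
    exact hρ.eigenvalues_nonneg i
  calc matSqrt ρ * matSqrt ρ = cfc (fun x => √x * √x) ρ := by
        rw [matSqrt, matFun_eq_cfc hρ.1, cfc_mul _ _ ρ]
    _ = cfc id ρ := cfc_congr fun x hx => Real.mul_self_sqrt (hspec x hx)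
    _ = ρ := cfc_id ℝ ρ

lemma matInvSqrt_mul_self_mul (hρ : ρ.PosDef) : matInvSqrt ρ * ρ * matInvSqrt ρ = 1 := by
  have hρsa : IsSelfAdjoint ρ := hρ.1
  have hspec : ∀ x ∈ spectrum ℝ ρ, 0 < x := by
    rw [hρ.1.spectrum_real_eq_range_eigenvalues]
    rintro - ⟨i, rfl⟩
    exact hρ.eigenvalues_pos i
  have hcont : ContinuousOn (fun x => (√x)⁻¹) (spectrum ℝ ρ) :=
    (finite_real_spectrum (A := ρ)).continuousOn _
  calc matInvSqrt ρ * ρ * matInvSqrt ρ = cfc (fun x => (√x)⁻¹ * x * (√x)⁻¹) ρ := by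
        rw [matInvSqrt, matFun_eq_cfc hρ.1, cfc_mul _ _ ρ, cfc_mul _ _ ρ, cfc_id' ℝ ρ]
    _ = cfc (fun _ => 1) ρ := cfc_congr fun x hx => by
        have hx' := hspec x hx
        field_simp
        exact (Real.sq_sqrt hx'.le).symm
    _ = 1 := cfc_const_one ℝ ρ

end FunctionalCalculus

lemma Matrix.PosSemidef.mul_mul_mul_mul_of_isHermitian {n R : Type*} [Fintype n] [Ring R]
    [PartialOrder R] [StarRing R] {X P Q : Matrix n n R} (hX : X.PosSemidef)
    (hP : P.IsHermitian) (hQ : Q.IsHermitian) :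
    (Q * P * X * P * Q).PosSemidef := by
  have h := hX.conjTranspose_mul_mul_same (P * Q)
  rwa [conjTranspose_mul, hP.eq, hQ.eq, ← mul_assoc] at h

open scoped Kronecker

lemma trace_ptA [Fintype A] [Fintype B] [Fintype C] (X : Matrix (A × B × C) (A × B × C) ℂ) :
    (ptA X).trace = X.trace := by
  simp only [trace, diag, ptA, Fintype.sum_prod_type]
  exact (Finset.sum_comm.trans (Finset.sum_congr rfl fun _ _ => Finset.sum_comm)).symm

lemma bptFst_eq_sum_submatrix [Fintype A] [Fintype B] (M : Matrix (A × B) (A × B) ℂ) :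
    bptFst M = ∑ a, M.submatrix (Prod.mk a) (Prod.mk a) := by
  ext b b'
  simp [bptFst, Matrix.sum_apply]

lemma Matrix.PosSemidef.bptFst [Fintype A] [Fintype B] {M : Matrix (A × B) (A × B) ℂ}
    (hM : M.PosSemidef) : (bptFst M).PosSemidef := by
  rw [bptFst_eq_sum_submatrix]
  exact posSemidef_sum _ fun a _ => hM.submatrix _

lemma extBC_eq_kronecker [DecidableEq A] (M : Matrix (B × C) (B × C) ℂ) :
    extBC (A := A) M = (1 : Matrix A A ℂ) ⊗ₖ M := by
  ext ⟨a, x⟩ ⟨a', y⟩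
  simp [extBC, one_apply]

lemma extB_eq_extBC [DecidableEq A] [DecidableEq C] (J : Matrix B B ℂ) :
    extB (A := A) (C := C) J = extBC (J ⊗ₖ (1 : Matrix C C ℂ)) := by
  ext ⟨a, b, c⟩ ⟨a', b', c'⟩
  simp [extB, extBC, one_apply]

lemma extAB_eq_submatrix_kronecker [DecidableEq C] (M : Matrix (A × B) (A × B) ℂ) :
    extAB (C := C) M = (M ⊗ₖ (1 : Matrix C C ℂ)).submatrix
      (Equiv.prodAssoc A B C).symm (Equiv.prodAssoc A B C).symm := by
  ext ⟨a, b, c⟩ ⟨a', b', c'⟩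
  simp [extAB, one_apply]

lemma extBC_mul [Fintype A] [Fintype B] [Fintype C] [DecidableEq A]
    (M N : Matrix (B × C) (B × C) ℂ) : extBC (A := A) M * extBC N = extBC (M * N) := by
  simp only [extBC_eq_kronecker, ← mul_kronecker_mul, mul_one]

lemma extBC_conjTranspose [DecidableEq A] (M : Matrix (B × C) (B × C) ℂ) :
    (extBC (A := A) M)ᴴ = extBC Mᴴ := by
  simp only [extBC_eq_kronecker, conjTranspose_kronecker, conjTranspose_one]

lemma Matrix.PosSemidef.extAB [Fintype A] [Fintype B] [Fintype C] [DecidableEq C]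
    {M : Matrix (A × B) (A × B) ℂ} (hM : M.PosSemidef) : (extAB (C := C) M).PosSemidef := by
  rw [extAB_eq_submatrix_kronecker]
  exact (hM.kronecker PosSemidef.one).submatrix _

lemma extBC_mul_apply [Fintype A] [Fintype B] [Fintype C] [DecidableEq A]
    (N : Matrix (B × C) (B × C) ℂ) (X : Matrix (A × B × C) (A × B × C) ℂ) (a : A) (x : B × C)
    (z : A × B × C) : (extBC (A := A) N * X) (a, x) z = ∑ w, N x w * X (a, w) z := by
  rw [mul_apply, Fintype.sum_prod_type]
  simp [extBC, ite_mul]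

lemma mul_extBC_apply [Fintype A] [Fintype B] [Fintype C] [DecidableEq A]
    (N : Matrix (B × C) (B × C) ℂ) (X : Matrix (A × B × C) (A × B × C) ℂ) (a : A) (x : B × C)
    (z : A × B × C) : (X * extBC (A := A) N) z (a, x) = ∑ w, X z (a, w) * N w x := by
  rw [mul_apply, Fintype.sum_prod_type]
  simp [extBC, mul_ite, eq_comm]

lemma ptA_extBC_mul [Fintype A] [Fintype B] [Fintype C] [DecidableEq A]
    (N : Matrix (B × C) (B × C) ℂ) (X : Matrix (A × B × C) (A × B × C) ℂ) :
    ptA (extBC N * X) = N * ptA X := by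
  ext x y
  simp only [ptA, extBC_mul_apply, mul_apply (M := N), Finset.mul_sum]
  exact Finset.sum_comm

lemma ptA_mul_extBC [Fintype A] [Fintype B] [Fintype C] [DecidableEq A]
    (N : Matrix (B × C) (B × C) ℂ) (X : Matrix (A × B × C) (A × B × C) ℂ) :
    ptA (X * extBC N) = ptA X * N := by
  ext x y
  simp only [ptA, mul_extBC_apply, mul_apply (N := N), Finset.sum_mul]
  exact Finset.sum_comm

lemma ptA_extAB [Fintype A] [Fintype B] [DecidableEq C] (M : Matrix (A × B) (A × B) ℂ) :
    ptA (extAB M) = bptFst M ⊗ₖ (1 : Matrix C C ℂ) := by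
  ext ⟨b, c⟩ ⟨b', c'⟩
  simp [ptA, extAB, bptFst, one_apply]

lemma Matrix.IsHermitian.extBC [DecidableEq A] {S : Matrix (B × C) (B × C) ℂ}
    (hS : S.IsHermitian) : (extBC (A := A) S).IsHermitian := by
  rw [IsHermitian, extBC_conjTranspose, hS.eq]

lemma Matrix.IsHermitian.extB [DecidableEq A] [DecidableEq C] {J : Matrix B B ℂ}
    (hJ : J.IsHermitian) : (extB (A := A) (C := C) J).IsHermitian := by
  rw [extB_eq_extBC]
  refine IsHermitian.extBC ?_
  rw [IsHermitian, conjTranspose_kronecker, hJ.eq, conjTranspose_one]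

lemma ptA_extBC_mul_extB_mul_extAB_mul_extB_mul_extBC [Fintype A] [Fintype B] [Fintype C]
    [DecidableEq A] [DecidableEq C] (S : Matrix (B × C) (B × C) ℂ) (J : Matrix B B ℂ)
    (M : Matrix (A × B) (A × B) ℂ) :
    ptA (extBC (A := A) S * extB J * extAB M * extB J * extBC S) =
      S * (J * bptFst M * J) ⊗ₖ (1 : Matrix C C ℂ) * S := by
  have hJMJ : J ⊗ₖ 1 * bptFst M ⊗ₖ 1 * J ⊗ₖ 1 = (J * bptFst M * J) ⊗ₖ (1 : Matrix C C ℂ) := by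
    rw [← mul_kronecker_mul, ← mul_kronecker_mul, mul_one, mul_one]
  rw [extB_eq_extBC, ptA_mul_extBC, ptA_mul_extBC, extBC_mul, ptA_extBC_mul, ptA_extAB, ← hJMJ]
  simp only [mul_assoc]

theorem petz_output_density_general {A B C : Type*} [Fintype A] [Fintype B] [Fintype C]
    [DecidableEq A] [DecidableEq B] [DecidableEq C]
    (ρAB : Matrix (A × B) (A × B) ℂ) (ρBC : Matrix (B × C) (B × C) ℂ)
    (hAB : IsDensity ρAB) (hBC : IsDensity ρBC)
    (hBinv : IsUnit (bptFst ρAB))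
    (ϱ : Matrix (A × B × C) (A × B × C) ℂ)
    (hϱ : ϱ = extBC (matSqrt ρBC) * extB (matInvSqrt (bptFst ρAB)) * extAB ρAB
        * extB (matInvSqrt (bptFst ρAB)) * extBC (matSqrt ρBC)) :
    ϱ.PosSemidef ∧ ϱ.trace = 1 ∧ ptA ϱ = ρBC := by
  have hρB : (bptFst ρAB).PosDef := hAB.1.bptFst.posDef_iff_isUnit.mpr hBinv
  have hptA : ptA ϱ = ρBC := by
    rw [hϱ, ptA_extBC_mul_extB_mul_extAB_mul_extB_mul_extBC, matInvSqrt_mul_self_mul hρB,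
      one_kronecker_one, mul_one, matSqrt_mul_self hBC.1]
  refine ⟨?_, ?_, hptA⟩
  · rw [hϱ]
    exact hAB.1.extAB.mul_mul_mul_mul_of_isHermitian
      ((matFun_isHermitian _ _).extB) ((matFun_isHermitian _ _).extBC)
  · rw [← trace_ptA, hptA, hBC.2]

/-- The Petz recovery map `P_{B→BC}` applied to `ρ_AB` (with
`ρ_B = Tr_A ρ_AB = Tr_C ρ_BC` invertible) produces a positive semidefinite, trace-one
operator `ϱ_ABC = ρ_BC^{1/2} ρ_B^{-1/2} ρ_AB ρ_B^{-1/2} ρ_BC^{1/2}` with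
`Tr_A ϱ_ABC = ρ_BC`. -/
theorem petz_output_density {A B C : Type*} [Fintype A] [Fintype B] [Fintype C]
    [DecidableEq A] [DecidableEq B] [DecidableEq C]
    (ρAB : Matrix (A × B) (A × B) ℂ) (ρBC : Matrix (B × C) (B × C) ℂ)
    (hAB : IsDensity ρAB) (hBC : IsDensity ρBC)
    (hB : bptFst ρAB = bptSnd ρBC) (hBinv : IsUnit (bptFst ρAB))
    (ϱ : Matrix (A × B × C) (A × B × C) ℂ)
    (hϱ : ϱ = extBC (matSqrt ρBC) * extB (matInvSqrt (bptFst ρAB)) * extAB ρAB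
        * extB (matInvSqrt (bptFst ρAB)) * extBC (matSqrt ρBC)) :
    ϱ.PosSemidef ∧ ϱ.trace = 1 ∧ ptA ϱ = ρBC :=
  petz_output_density_general ρAB ρBC hAB hBC hBinv ϱ hϱ
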